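/- Let M = [A₁,…,A_k] have rank r and M̃ = [A₁+E₁,…,A_k+E_k]. Then for every index i > r (i.e., where σ_i(M) = 0), σ_i(M̃) ≤ √(Σ_{j=1}^k (2‖A_j‖₂‖E_j‖₂ + ‖E_j‖₂²)). -/

import Mathlib

open Matrix Finset

/-- Spectral (ℓ²-operator) norm of a matrix. -/
noncomputable def specNorm {m n : Type*} [Fintype m] [Fintype n] [DecidableEq n]
    (A : Matrix m n ℝ) : ℝ :=
  ‖LinearMap.toContinuousLinearMap (Matrix.toEuclideanLin A)‖

/-- Eigenvalues of a real symmetric matrix, in nonincreasing order (0-based);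
returns 0 if the matrix is not Hermitian. -/
noncomputable def eigDesc {n : ℕ} (A : Matrix (Fin n) (Fin n) ℝ) : Fin n → ℝ :=
  if hA : A.IsHermitian then
    fun i => hA.eigenvalues (Tuple.sort hA.eigenvalues i.rev)
  else fun _ => 0

/-- The `i`-th largest singular value (0-based), defined as the square root of the
`i`-th largest eigenvalue of `Aᵀ * A`; zero for out-of-range indices. -/
noncomputable def sval {m n : ℕ} (A : Matrix (Fin m) (Fin n) ℝ) (i : ℕ) : ℝ :=
  if h : i < n then Real.sqrt (eigDesc (Aᵀ * A) ⟨i, h⟩) else 0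

/-- Horizontal concatenation of `k` matrices of size `m × n`. -/
noncomputable def hconcat {m n k : ℕ} (A : Fin k → Matrix (Fin m) (Fin n) ℝ) :
    Matrix (Fin m) (Fin (k * n)) ℝ :=
  Matrix.of fun i j => A (finProdFinEquiv.symm j).1 i (finProdFinEquiv.symm j).2

/-!
On the kernel `K` of `M = [A₁, …, A_k]`, of dimension `kn - r`, the perturbed matrix `M̃` acts as
`[E₁, …, E_k]`, so by the triangle and Cauchy–Schwarz inequalities
`‖M̃ x‖² ≤ (∑ ‖E_j‖₂²) ‖x‖²` on `K`. By the Courant–Fischer principle, a subspace of dimension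
`kn - r` on which the Rayleigh quotient of `M̃ᵀ M̃` is at most `c` leaves at most `r` eigenvalues of
`M̃ᵀ M̃` above `c`. Hence `σ_i(M̃)² ≤ ∑ ‖E_j‖₂² ≤ ∑ (2 ‖A_j‖₂ ‖E_j‖₂ + ‖E_j‖₂²)` for `i > r`.
-/

open Module
open scoped RealInnerProductSpace

lemma Tuple.apply_sort_rev_le_of_card_filter_lt_le {α : Type*} [LinearOrder α] {N : ℕ}
    (f : Fin N → α) (c : α) (i : Fin N) (hc : #{j | c < f j} ≤ i) :
    f (Tuple.sort f i.rev) ≤ c := by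
  by_contra! hlt
  have hsub : Ici i.rev ⊆ ({p | c < f (Tuple.sort f p)} : Finset (Fin N)) := fun p hp =>
    mem_filter.2 ⟨mem_univ _, hlt.trans_le (Tuple.monotone_sort f (mem_Ici.1 hp))⟩
  have hcard : #{p | c < f (Tuple.sort f p)} = #{j | c < f j} := by
    simp only [card_filter]
    exact Equiv.sum_comp (Tuple.sort f) fun j => if c < f j then 1 else 0
  have := card_le_card hsub
  rw [Fin.card_Ici, hcard, Fin.val_rev] at this
  omega

namespace Matrix.IsHermitian

variable {n : Type*} [Fintype n] [DecidableEq n] {B : Matrix n n ℝ} (hB : B.IsHermitian)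

lemma inner_eigenvectorBasis_toEuclideanLin (x : EuclideanSpace ℝ n) (j : n) :
    ⟪hB.eigenvectorBasis j, toEuclideanLin B x⟫ =
      hB.eigenvalues j * ⟪hB.eigenvectorBasis j, x⟫ := by
  have hBb : toEuclideanLin B (hB.eigenvectorBasis j) =
      hB.eigenvalues j • hB.eigenvectorBasis j := by
    ext l
    simpa using congrFun (hB.mulVec_eigenvectorBasis j) l
  rw [← (isSymmetric_toEuclideanLin_iff.mpr hB) _ x, hBb, real_inner_smul_left]

lemma inner_toEuclideanLin_self (x : EuclideanSpace ℝ n) :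
    ⟪x, toEuclideanLin B x⟫ = ∑ j, hB.eigenvalues j * ⟪hB.eigenvectorBasis j, x⟫ ^ 2 := by
  rw [← hB.eigenvectorBasis.sum_inner_mul_inner]
  refine sum_congr rfl fun j _ => ?_
  rw [inner_eigenvectorBasis_toEuclideanLin, real_inner_comm]
  ring

lemma lt_inner_toEuclideanLin_self {c : ℝ} {x : EuclideanSpace ℝ n} (hx : x ≠ 0)
    (hsupp : ∀ j, hB.eigenvalues j ≤ c → ⟪hB.eigenvectorBasis j, x⟫ = 0) :
    c * ‖x‖ ^ 2 < ⟪x, toEuclideanLin B x⟫ := by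
  obtain ⟨j₀, hj₀⟩ : ∃ j, ⟪hB.eigenvectorBasis j, x⟫ ≠ 0 := by
    by_contra! h
    exact hx (hB.eigenvectorBasis.toBasis.ext_elem fun j => by
      simpa [OrthonormalBasis.repr_apply_apply] using h j)
  have hterm : ∀ j, 0 ≤ (hB.eigenvalues j - c) * ⟪hB.eigenvectorBasis j, x⟫ ^ 2 := by
    intro j
    rcases le_or_gt (hB.eigenvalues j) c with hj | hj
    · simp [hsupp j hj]
    · exact mul_nonneg (sub_nonneg.2 hj.le) (sq_nonneg _)
  have hpos : 0 < ∑ j, (hB.eigenvalues j - c) * ⟪hB.eigenvectorBasis j, x⟫ ^ 2 := by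
    refine sum_pos' (fun j _ => hterm j) ⟨j₀, mem_univ _, ?_⟩
    have hlt : c < hB.eigenvalues j₀ := not_le.1 fun h => hj₀ (hsupp j₀ h)
    have := sub_pos.2 hlt
    positivity
  rw [hB.inner_toEuclideanLin_self, ← hB.eigenvectorBasis.sum_sq_inner_right, mul_sum]
  simp only [sub_mul, sum_sub_distrib] at hpos
  linarith

/-- The counting form of the Courant–Fischer min-max principle. -/
lemma card_filter_lt_eigenvalues_add_finrank_le {c : ℝ} (K : Submodule ℝ (EuclideanSpace ℝ n))
    (hK : ∀ x ∈ K, ⟪x, toEuclideanLin B x⟫ ≤ c * ‖x‖ ^ 2) :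
    #{j | c < hB.eigenvalues j} + finrank ℝ K ≤ Fintype.card n := by
  let φ : K →ₗ[ℝ] {j // hB.eigenvalues j ≤ c} → ℝ :=
    LinearMap.pi fun j => innerₛₗ ℝ (hB.eigenvectorBasis j) ∘ₗ K.subtype
  have hφ : Function.Injective φ := by
    rw [← LinearMap.ker_eq_bot, Submodule.eq_bot_iff]
    intro x hx
    by_contra hx0
    have hsupp : ∀ j, hB.eigenvalues j ≤ c → ⟪hB.eigenvectorBasis j, x⟫ = 0 :=
      fun j hj => congrFun (LinearMap.mem_ker.1 hx) ⟨j, hj⟩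
    exact (hK x x.2).not_gt (hB.lt_inner_toEuclideanLin_self (by simpa using hx0) hsupp)
  have hdim := LinearMap.finrank_le_finrank_of_injective hφ
  rw [finrank_fintype_fun_eq_card, Fintype.card_subtype] at hdim
  have hsplit := card_filter_add_card_filter_not (s := univ) (fun j => c < hB.eigenvalues j)
  simp only [not_lt, card_univ] at hsplit
  omega

end Matrix.IsHermitian

section specNorm

variable {m n : Type*} [Fintype m] [Fintype n] [DecidableEq n]

lemma specNorm_nonneg (F : Matrix m n ℝ) : 0 ≤ specNorm F := norm_nonneg _

lemma norm_toEuclideanLin_apply_le (F : Matrix m n ℝ) (x : EuclideanSpace ℝ n) :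
    ‖toEuclideanLin F x‖ ≤ specNorm F * ‖x‖ :=
  (LinearMap.toContinuousLinearMap (toEuclideanLin F)).le_opNorm x

end specNorm

lemma inner_toEuclideanLin_transpose_mul_self {m n : Type*} [Fintype m] [Fintype n]
    [DecidableEq m] [DecidableEq n] (M : Matrix m n ℝ) (x : EuclideanSpace ℝ n) :
    ⟪x, toEuclideanLin (Mᵀ * M) x⟫ = ‖toEuclideanLin M x‖ ^ 2 := by
  rw [← conjTranspose_eq_transpose_of_trivial, toLpLin_mul_same, LinearMap.comp_apply,
    toEuclideanLin_conjTranspose_eq_adjoint, LinearMap.adjoint_inner_right,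
    real_inner_self_eq_norm_sq]

lemma rank_add_finrank_ker_toEuclideanLin {𝕜 m n : Type*} [RCLike 𝕜] [Fintype m] [Fintype n]
    [DecidableEq n] (M : Matrix m n 𝕜) :
    M.rank + finrank 𝕜 (LinearMap.ker (toEuclideanLin M)) = Fintype.card n := by
  rw [rank_eq_finrank_range_toLin M (PiLp.basisFun 2 𝕜 m) (PiLp.basisFun 2 𝕜 n),
    ← toLpLin_eq_toLin, LinearMap.finrank_range_add_finrank_ker, finrank_euclideanSpace]

section hconcat

variable {m n k : ℕ}

noncomputable def vecBlock (x : EuclideanSpace ℝ (Fin (k * n))) (j : Fin k) :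
    EuclideanSpace ℝ (Fin n) :=
  WithLp.toLp 2 fun l => x (finProdFinEquiv (j, l))

lemma sum_norm_vecBlock_sq (x : EuclideanSpace ℝ (Fin (k * n))) :
    ∑ j, ‖vecBlock x j‖ ^ 2 = ‖x‖ ^ 2 := by
  simp only [EuclideanSpace.norm_sq_eq, vecBlock]
  rw [← finProdFinEquiv.sum_comp (fun p => ‖x p‖ ^ 2), Fintype.sum_prod_type]

lemma hconcat_add (A E : Fin k → Matrix (Fin m) (Fin n) ℝ) :
    hconcat (A + E) = hconcat A + hconcat E := by
  ext; simp [hconcat]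

lemma toEuclideanLin_hconcat_apply (F : Fin k → Matrix (Fin m) (Fin n) ℝ)
    (x : EuclideanSpace ℝ (Fin (k * n))) :
    toEuclideanLin (hconcat F) x = ∑ j, toEuclideanLin (F j) (vecBlock x j) := by
  ext i
  simp only [toLpLin_apply, mulVec, dotProduct, hconcat, vecBlock, of_apply, WithLp.ofLp_sum,
    Finset.sum_apply]
  rw [← finProdFinEquiv.sum_comp, Fintype.sum_prod_type]
  simp

lemma norm_toEuclideanLin_hconcat_apply_sq_le (F : Fin k → Matrix (Fin m) (Fin n) ℝ)
    (x : EuclideanSpace ℝ (Fin (k * n))) :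
    ‖toEuclideanLin (hconcat F) x‖ ^ 2 ≤ (∑ j, specNorm (F j) ^ 2) * ‖x‖ ^ 2 := by
  rw [toEuclideanLin_hconcat_apply, ← sum_norm_vecBlock_sq]
  calc ‖∑ j, toEuclideanLin (F j) (vecBlock x j)‖ ^ 2
      ≤ (∑ j, specNorm (F j) * ‖vecBlock x j‖) ^ 2 := by
        gcongr
        exact (norm_sum_le _ _).trans (sum_le_sum fun j _ => norm_toEuclideanLin_apply_le _ _)
    _ ≤ (∑ j, specNorm (F j) ^ 2) * ∑ j, ‖vecBlock x j‖ ^ 2 := sum_mul_sq_le_sq_mul_sq _ _ _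

end hconcat

lemma sval_le_sqrt_of_norm_sq_le {m N : ℕ} (M : Matrix (Fin m) (Fin N) ℝ)
    (K : Submodule ℝ (EuclideanSpace ℝ (Fin N))) {c : ℝ}
    (hK : ∀ x ∈ K, ‖toEuclideanLin M x‖ ^ 2 ≤ c * ‖x‖ ^ 2) {i : ℕ} (hi : N ≤ i + finrank ℝ K) :
    sval M i ≤ √c := by
  unfold sval
  split_ifs with hiN
  · have hB : (Mᵀ * M).IsHermitian := isHermitian_conjTranspose_mul_self M
    have hcount := hB.card_filter_lt_eigenvalues_add_finrank_le K fun x hx => by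
      rw [inner_toEuclideanLin_transpose_mul_self]; exact hK x hx
    rw [eigDesc, dif_pos hB]
    refine Real.sqrt_le_sqrt (Tuple.apply_sort_rev_le_of_card_filter_lt_le _ c _ ?_)
    rw [Fintype.card_fin] at hcount
    exact le_of_add_le_add_right (hcount.trans hi)
  · exact Real.sqrt_nonneg c

theorem stmt8_general {m n k : ℕ} (A E : Fin k → Matrix (Fin m) (Fin n) ℝ)
    (i : ℕ) (hi : (hconcat A).rank ≤ i) :
    sval (hconcat fun j => A j + E j) i
      ≤ Real.sqrt (∑ j, (2 * specNorm (A j) * specNorm (E j) + specNorm (E j) ^ 2)) := by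
  have hdim : k * n ≤ i + finrank ℝ (LinearMap.ker (toEuclideanLin (hconcat A))) := by
    have := rank_add_finrank_ker_toEuclideanLin (hconcat A)
    rw [Fintype.card_fin] at this
    omega
  refine sval_le_sqrt_of_norm_sq_le _ _ (fun x hx => ?_) hdim
  rw [show (fun j => A j + E j) = A + E from rfl, hconcat_add, map_add, LinearMap.add_apply,
    LinearMap.mem_ker.1 hx, zero_add]
  calc ‖toEuclideanLin (hconcat E) x‖ ^ 2 ≤ (∑ j, specNorm (E j) ^ 2) * ‖x‖ ^ 2 :=
        norm_toEuclideanLin_hconcat_apply_sq_le E x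
    _ ≤ _ := by
        gcongr with j
        exact le_add_of_nonneg_left
          (mul_nonneg (mul_nonneg zero_le_two (specNorm_nonneg _)) (specNorm_nonneg _))

theorem stmt8 {m n k : ℕ} (A E : Fin k → Matrix (Fin m) (Fin n) ℝ)
    (i : ℕ) (hi : (hconcat A).rank ≤ i) (hi2 : i < min m (k * n)) :
    sval (hconcat fun j => A j + E j) i
      ≤ Real.sqrt (∑ j, (2 * specNorm (A j) * specNorm (E j) + specNorm (E j) ^ 2)) :=
  stmt8_general A E i hi
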